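/- arXiv:2209.03724 — 2 statements merged into one kernel-verified Lean document; each statement's English description precedes it below -/
import Mathlib

section
/- If (φ₁(t), v₁(t), v₂(t)) is a solution of the reduced Ziegler pendulum system φ₁' = v₁, v₁' = (r₁ - (A₁₂/A₂₂)r₂)/(A₁₁ - A₁₂A₂₁/A₂₂), v₂' = (r₂ - (A₂₁/A₁₁)r₁)/(A₂₂ - A₁₂A₂₁/A₁₁), then (-φ₁(-t), v₁(-t), v₂(-t)) is also a solution of the same system. -/
/-- Mass-matrix entry `A₁₁` of the Ziegler pendulum. -/
noncomputable def A11 (m1 m3 l1 l3 : ℝ) : ℝ := m1 * l1 ^ 2 + m3 * l3 ^ 2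

/-- Mass-matrix entry `A₁₂ = A₂₁`. -/
noncomputable def A12 (m1 m3 l1 l2 l3 φ : ℝ) : ℝ :=
  m1 * l1 ^ 2 + m3 * l3 ^ 2 + (m1 * l1 - m3 * l3) * l2 * Real.cos φ

/-- Mass-matrix entry `A₂₂`. -/
noncomputable def A22 (m1 m2 m3 l1 l2 l3 φ : ℝ) : ℝ :=
  (m1 + m2 + m3) * l2 ^ 2 + m1 * l1 ^ 2 + m3 * l3 ^ 2 +
    2 * (m1 * l1 - m3 * l3) * l2 * Real.cos φ

/-- Right-hand side `r₁`. -/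
noncomputable def r1 (m1 m3 l1 l2 l3 k1 φ v2 : ℝ) : ℝ :=
  -k1 * φ - (m1 * l1 - m3 * l3) * l2 * v2 ^ 2 * Real.sin φ

/-- Right-hand side `r₂` (with `k₂ = 0`). -/
noncomputable def r2 (m1 m3 l1 l2 l3 F φ v1 v2 : ℝ) : ℝ :=
  -F * l1 * Real.sin φ + (m1 * l1 - m3 * l3) * l2 * v1 * (v1 + 2 * v2) * Real.sin φ

/-- RHS of the equation for `v₁'` in the reduced system. -/
noncomputable def rhs1 (m1 m2 m3 l1 l2 l3 k1 F φ v1 v2 : ℝ) : ℝ :=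
  (r1 m1 m3 l1 l2 l3 k1 φ v2 -
      A12 m1 m3 l1 l2 l3 φ / A22 m1 m2 m3 l1 l2 l3 φ * r2 m1 m3 l1 l2 l3 F φ v1 v2) /
    (A11 m1 m3 l1 l3 -
      A12 m1 m3 l1 l2 l3 φ * A12 m1 m3 l1 l2 l3 φ / A22 m1 m2 m3 l1 l2 l3 φ)

/-- RHS of the equation for `v₂'` in the reduced system. -/
noncomputable def rhs2 (m1 m2 m3 l1 l2 l3 k1 F φ v1 v2 : ℝ) : ℝ :=
  (r2 m1 m3 l1 l2 l3 F φ v1 v2 -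
      A12 m1 m3 l1 l2 l3 φ / A11 m1 m3 l1 l3 * r1 m1 m3 l1 l2 l3 k1 φ v2) /
    (A22 m1 m2 m3 l1 l2 l3 φ -
      A12 m1 m3 l1 l2 l3 φ * A12 m1 m3 l1 l2 l3 φ / A11 m1 m3 l1 l3)

/-!
The mass-matrix entries depend on `φ₁` only through `cos φ₁`, so they are even in `φ₁`, while
`r₁` and `r₂` are odd in `φ₁`. Hence `rhs₁` and `rhs₂` are odd in `φ₁`, and this sign change
cancels the one produced by reversing time.
-/

theorem HasDerivAt.comp_neg {𝕜 F : Type*} [NontriviallyNormedField 𝕜] [NormedAddCommGroup F]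
    [NormedSpace 𝕜 F] {f : 𝕜 → F} {f' : F} {x : 𝕜} (hf : HasDerivAt f f' (-x)) :
    HasDerivAt (fun s => f (-s)) (-f') x := by
  simpa [Function.comp_def] using hf.scomp x (hasDerivAt_neg x)

section Parity

variable (m1 m2 m3 l1 l2 l3 k1 F φ v1 v2 : ℝ)

theorem A12_neg : A12 m1 m3 l1 l2 l3 (-φ) = A12 m1 m3 l1 l2 l3 φ := by
  simp only [A12, Real.cos_neg]

theorem A22_neg : A22 m1 m2 m3 l1 l2 l3 (-φ) = A22 m1 m2 m3 l1 l2 l3 φ := by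
  simp only [A22, Real.cos_neg]

theorem r1_neg : r1 m1 m3 l1 l2 l3 k1 (-φ) v2 = -r1 m1 m3 l1 l2 l3 k1 φ v2 := by
  simp only [r1, Real.sin_neg]
  ring

theorem r2_neg : r2 m1 m3 l1 l2 l3 F (-φ) v1 v2 = -r2 m1 m3 l1 l2 l3 F φ v1 v2 := by
  simp only [r2, Real.sin_neg]
  ring

theorem rhs1_neg :
    rhs1 m1 m2 m3 l1 l2 l3 k1 F (-φ) v1 v2 = -rhs1 m1 m2 m3 l1 l2 l3 k1 F φ v1 v2 := by
  simp only [rhs1, A12_neg, A22_neg, r1_neg, r2_neg]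
  ring

theorem rhs2_neg :
    rhs2 m1 m2 m3 l1 l2 l3 k1 F (-φ) v1 v2 = -rhs2 m1 m2 m3 l1 l2 l3 k1 F φ v1 v2 := by
  simp only [rhs2, A12_neg, A22_neg, r1_neg, r2_neg]
  ring

end Parity

theorem ziegler_reversible_general
    (m1 m2 m3 l1 l2 l3 k1 F : ℝ)
    (φ v1 v2 : ℝ → ℝ)
    (hφ : ∀ t, HasDerivAt φ (v1 t) t)
    (hv1 : ∀ t, HasDerivAt v1 (rhs1 m1 m2 m3 l1 l2 l3 k1 F (φ t) (v1 t) (v2 t)) t)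
    (hv2 : ∀ t, HasDerivAt v2 (rhs2 m1 m2 m3 l1 l2 l3 k1 F (φ t) (v1 t) (v2 t)) t) :
    (∀ t, HasDerivAt (fun s => -φ (-s)) (v1 (-t)) t) ∧
    (∀ t, HasDerivAt (fun s => v1 (-s))
      (rhs1 m1 m2 m3 l1 l2 l3 k1 F (-φ (-t)) (v1 (-t)) (v2 (-t))) t) ∧
    (∀ t, HasDerivAt (fun s => v2 (-s))
      (rhs2 m1 m2 m3 l1 l2 l3 k1 F (-φ (-t)) (v1 (-t)) (v2 (-t))) t) := by
  refine ⟨fun t => ?_, fun t => ?_, fun t => ?_⟩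
  · simpa [Pi.neg_def] using (hφ (-t)).comp_neg.neg
  · simpa only [rhs1_neg] using (hv1 (-t)).comp_neg
  · simpa only [rhs2_neg] using (hv2 (-t)).comp_neg

/-- Reversibility of the reduced Ziegler pendulum system: if `(φ₁, v₁, v₂)` is a
solution, then so is `(-φ₁(-t), v₁(-t), v₂(-t))`. -/
theorem ziegler_reversible
    (m1 m2 m3 l1 l2 l3 k1 F : ℝ)
    (hm1 : 0 < m1) (hm2 : 0 < m2) (hm3 : 0 < m3)
    (hl1 : 0 < l1) (hl2 : 0 < l2) (hl3 : 0 < l3)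
    (φ v1 v2 : ℝ → ℝ)
    (hφ : ∀ t, HasDerivAt φ (v1 t) t)
    (hv1 : ∀ t, HasDerivAt v1 (rhs1 m1 m2 m3 l1 l2 l3 k1 F (φ t) (v1 t) (v2 t)) t)
    (hv2 : ∀ t, HasDerivAt v2 (rhs2 m1 m2 m3 l1 l2 l3 k1 F (φ t) (v1 t) (v2 t)) t) :
    (∀ t, HasDerivAt (fun s => -φ (-s)) (v1 (-t)) t) ∧
    (∀ t, HasDerivAt (fun s => v1 (-s))
      (rhs1 m1 m2 m3 l1 l2 l3 k1 F (-φ (-t)) (v1 (-t)) (v2 (-t))) t) ∧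
    (∀ t, HasDerivAt (fun s => v2 (-s))
      (rhs2 m1 m2 m3 l1 l2 l3 k1 F (-φ (-t)) (v1 (-t)) (v2 (-t))) t) :=
  ziegler_reversible_general m1 m2 m3 l1 l2 l3 k1 F φ v1 v2 hφ hv1 hv2
end

section
/- For all positive m₁, m₂, m₃, l₁, l₂, l₃ and all φ₁ ∈ ℝ, the determinant of the mass matrix of the Ziegler pendulum is strictly positive: A₁₁A₂₂ - A₁₂² > 0, where A₁₁ = m₁l₁² + m₃l₃², A₁₂ = m₁l₁² + m₃l₃² + (m₁l₁ - m₃l₃)l₂ cos φ₁, A₂₂ = (m₁+m₂+m₃)l₂² + m₁l₁² + m₃l₃² + 2(m₁l₁ - m₃l₃)l₂ cos φ₁. -/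
/-- The determinant of the mass matrix of the Ziegler pendulum is strictly
positive for all `φ₁`. -/
theorem mass_matrix_det_positive
    (m1 m2 m3 l1 l2 l3 : ℝ)
    (hm1 : 0 < m1) (hm2 : 0 < m2) (hm3 : 0 < m3)
    (hl1 : 0 < l1) (hl2 : 0 < l2) (hl3 : 0 < l3) (φ1 : ℝ) :
    0 < (m1 * l1 ^ 2 + m3 * l3 ^ 2) *
        ((m1 + m2 + m3) * l2 ^ 2 + m1 * l1 ^ 2 + m3 * l3 ^ 2 +
          2 * (m1 * l1 - m3 * l3) * l2 * Real.cos φ1) -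
      (m1 * l1 ^ 2 + m3 * l3 ^ 2 + (m1 * l1 - m3 * l3) * l2 * Real.cos φ1) ^ 2 := by
  have h1 : Real.cos φ1 ^ 2 ≤ 1 := Real.cos_sq_le_one φ1
  nlinarith [sq_nonneg ((m1 * l1 - m3 * l3) * l2 * Real.cos φ1),
    mul_pos hm1 hm3, sq_nonneg (l1 + l3), mul_pos hl1 hl3,
    mul_pos hm2 (mul_pos (mul_pos hl2 hl2) (add_pos (mul_pos hm1 (mul_pos hl1 hl1)) (mul_pos hm3 (mul_pos hl3 hl3)))),
    mul_nonneg (mul_nonneg (mul_pos hm1 hm3).le (sq_nonneg (l1 + l3))) (sq_nonneg l2),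
    mul_nonneg (mul_nonneg (sq_nonneg (m1*l1 - m3*l3)) (sq_nonneg l2)) (sub_nonneg.2 h1)]
end
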